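/- arXiv:1607.05622 — 4 statements merged into one kernel-verified Lean document; each statement's English description precedes it below -/
import Mathlib

section
/- Let Q_h be the operator sending u ∈ H¹(x_i, x_{i+1}) to the weak function {P^k u, u(x_i), u(x_{i+1})}, where P^k is the L² projection onto P_k((x_i,x_{i+1})). Then with r = k+1, the discrete weak derivative satisfies d_{w,r}(Q_h u) = P^r(u'), the L² projection of u' onto P_r((x_i,x_{i+1})). -/
/-- With `r = k+1`: let `Q_h u = {P^k u, u(x_i), u(x_{i+1})}` where `P^k u` is the `L²`
projection of `u ∈ H¹(x_i,x_{i+1})` onto `P_k`.  Then the discrete weak derivative of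
`Q_h u` is the `L²` projection of `u'` onto `P_{k+1}`: any `p ∈ P_{k+1}` satisfying the
defining relation of `d_{w,k+1}(Q_h u)` satisfies `∫ p q = ∫ u' q` for all `q ∈ P_{k+1}`. -/
theorem stmt6 (xi xi1 : ℝ) (hx : xi < xi1) (k : ℕ) (u du : ℝ → ℝ)
    (hu : ∀ x ∈ Set.Icc xi xi1, HasDerivWithinAt u (du x) (Set.Icc xi xi1) x)
    (hdu : IntervalIntegrable du MeasureTheory.volume xi xi1)
    (hdu' : ∀ q : Polynomial ℝ,
      IntervalIntegrable (fun x => du x * q.eval x) MeasureTheory.volume xi xi1)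
    (hu' : ∀ q : Polynomial ℝ,
      IntervalIntegrable (fun x => u x * q.eval x) MeasureTheory.volume xi xi1)
    (pk : Polynomial ℝ) (hpk : pk.natDegree ≤ k)
    (hproj : ∀ q : Polynomial ℝ, q.natDegree ≤ k →
      ∫ x in xi..xi1, (u x - pk.eval x) * q.eval x = 0)
    (p : Polynomial ℝ) (hp : p.natDegree ≤ k + 1)
    (hpdef : ∀ q : Polynomial ℝ, q.natDegree ≤ k + 1 →
      ∫ x in xi..xi1, p.eval x * q.eval x
        = -(∫ x in xi..xi1, pk.eval x * q.derivative.eval x)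
          + u xi1 * q.eval xi1 - u xi * q.eval xi) :
    ∀ q : Polynomial ℝ, q.natDegree ≤ k + 1 →
      ∫ x in xi..xi1, p.eval x * q.eval x = ∫ x in xi..xi1, du x * q.eval x := by
  intro q hq
  have huIcc : Set.uIcc xi xi1 = Set.Icc xi xi1 := Set.uIcc_of_le hx.le
  have hdq : q.derivative.natDegree ≤ k := by
    refine le_trans q.natDegree_derivative_le ?_
    omega
  -- integration by parts
  have hibp : ∫ x in xi..xi1, u x * q.derivative.eval x
      = u xi1 * q.eval xi1 - u xi * q.eval xi - ∫ x in xi..xi1, du x * q.eval x := by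
    apply intervalIntegral.integral_mul_deriv_eq_deriv_mul_of_hasDerivWithinAt
    · intro x hxm
      rw [huIcc] at hxm ⊢
      exact hu x hxm
    · intro x hxm
      exact (q.hasDerivAt x).hasDerivWithinAt
    · exact hdu
    · exact (Polynomial.continuous _).intervalIntegrable _ _
  -- projection property
  have hsplit : ∫ x in xi..xi1, (u x - pk.eval x) * q.derivative.eval x
      = (∫ x in xi..xi1, u x * q.derivative.eval x)
        - ∫ x in xi..xi1, pk.eval x * q.derivative.eval x := by
    rw [← intervalIntegral.integral_sub (g := fun x => pk.eval x * q.derivative.eval x) (hu' q.derivative)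
      (((pk.continuous).mul (Polynomial.continuous _)).intervalIntegrable _ _)]
    congr 1; ext x; ring
  have hpr := hproj q.derivative hdq
  rw [hsplit] at hpr
  rw [hpdef q hq]
  linarith
end

section
/- For any u ∈ H¹(0,1) and integer k ≥ 0 with r = k+1, there exists on each element I_i a polynomial π_h u ∈ P_r(I_i) such that ((π_h u)', q)_{L²(I_i)} = (u', q)_{L²(I_i)} for all q ∈ P_k(I_i) and π_h u(x_i) = u(x_i), π_h u(x_{i+1}) = u(x_{i+1}); moreover π_h u is uniquely determined by these conditions. -/
open Polynomial MeasureTheory Set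

noncomputable def pAntider (g : Polynomial ℝ) : Polynomial ℝ :=
  g.sum fun n a => C (a / (n + 1)) * X ^ (n + 1)

lemma pAntider_derivative (g : Polynomial ℝ) : derivative (pAntider g) = g := by
  conv_rhs => rw [← g.sum_C_mul_X_pow_eq]
  rw [pAntider, Polynomial.sum, Polynomial.sum, map_sum]
  refine Finset.sum_congr rfl fun n _ => ?_
  rw [derivative_C_mul, derivative_X_pow]
  push_cast
  rw [← mul_assoc, ← C_mul, div_mul_cancel₀]
  positivity

lemma pAntider_natDegree (g : Polynomial ℝ) : (pAntider g).natDegree ≤ g.natDegree + 1 := by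
  refine natDegree_sum_le_of_forall_le _ _ fun n hn => ?_
  refine (natDegree_mul_le).trans ?_
  simp only [natDegree_C, natDegree_X_pow, zero_add]
  exact Nat.add_le_add_right (le_natDegree_of_mem_supp _ hn) 1

lemma poly_eq_zero_of_integral_sq {a b : ℝ} (hab : a < b) (q : Polynomial ℝ)
    (h : ∫ x in a..b, q.eval x * q.eval x = 0) : q = 0 := by
  by_contra hq
  have hroots : Set.Finite {x : ℝ | q.IsRoot x} := q.finite_setOf_isRoot hq
  have hcont : Continuous fun x : ℝ => q.eval x * q.eval x := q.continuous.mul q.continuous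
  rw [intervalIntegral.integral_of_le hab.le] at h
  have hint : IntegrableOn (fun x : ℝ => q.eval x * q.eval x) (Ioc a b) volume :=
    (intervalIntegrable_iff_integrableOn_Ioc_of_le hab.le).mp (hcont.intervalIntegrable a b)
  have h0 : (fun x : ℝ => q.eval x * q.eval x) =ᵐ[volume.restrict (Ioc a b)] 0 :=
    (integral_eq_zero_iff_of_nonneg (fun x => mul_self_nonneg _) hint).mp h
  have h1 : ∀ᵐ x ∂(volume.restrict (Ioc a b)), q.IsRoot x := by
    filter_upwards [h0] with x hx
    exact mul_self_eq_zero.mp hx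
  have h2 : volume ({x : ℝ | ¬ q.IsRoot x} ∩ Ioc a b) = 0 := by
    have := ae_iff.mp h1
    rwa [Measure.restrict_apply' measurableSet_Ioc] at this
  have h3 : volume (Ioc a b) = 0 := by
    have hsub : Ioc a b ⊆ {x : ℝ | ¬ q.IsRoot x} ∩ Ioc a b ∪ {x : ℝ | q.IsRoot x} := by
      intro x hx
      by_cases hr : q.IsRoot x
      · exact Or.inr hr
      · exact Or.inl ⟨hr, hx⟩
    refine le_antisymm ?_ zero_le
    calc volume (Ioc a b) ≤ volume ({x : ℝ | ¬ q.IsRoot x} ∩ Ioc a b ∪ {x : ℝ | q.IsRoot x}) :=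
          measure_mono hsub
      _ ≤ volume ({x : ℝ | ¬ q.IsRoot x} ∩ Ioc a b) + volume {x : ℝ | q.IsRoot x} :=
          measure_union_le _ _
      _ = 0 := by rw [h2, hroots.measure_zero, add_zero]
  rw [Real.volume_Ioc] at h3
  simp only [ENNReal.ofReal_eq_zero, sub_nonpos] at h3
  exact absurd h3 (not_le.mpr hab)

lemma polyMulIntegrable (a b : ℝ) (p q : Polynomial ℝ) :
    IntervalIntegrable (fun x => p.eval x * q.eval x) volume a b :=
  (p.continuous.mul q.continuous).intervalIntegrable a b

noncomputable def Bmap (a b : ℝ) (n : ℕ) :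
    degreeLT ℝ n →ₗ[ℝ] Module.Dual ℝ (degreeLT ℝ n) :=
  LinearMap.mk₂ ℝ (fun p q => ∫ x in a..b, (p : Polynomial ℝ).eval x * (q : Polynomial ℝ).eval x)
    (fun p p' q => by
      simp only [Submodule.coe_add, eval_add, add_mul]
      exact intervalIntegral.integral_add (polyMulIntegrable a b _ _) (polyMulIntegrable a b _ _))
    (fun c p q => by
      rw [← intervalIntegral.integral_smul]
      congr 1
      funext x
      simp only [SetLike.val_smul, Polynomial.eval_smul, smul_eq_mul]
      ring)
    (fun p q q' => by
      simp only [Submodule.coe_add, eval_add, mul_add]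
      exact intervalIntegral.integral_add (polyMulIntegrable a b _ _) (polyMulIntegrable a b _ _))
    (fun c p q => by
      rw [← intervalIntegral.integral_smul]
      congr 1
      funext x
      simp only [SetLike.val_smul, Polynomial.eval_smul, smul_eq_mul]
      ring)

noncomputable def Lmap (a b : ℝ) (du : ℝ → ℝ) (n : ℕ)
    (h : ∀ q : Polynomial ℝ, IntervalIntegrable (fun x => du x * q.eval x) volume a b) :
    Module.Dual ℝ (degreeLT ℝ n) where
  toFun q := ∫ x in a..b, du x * (q : Polynomial ℝ).eval x
  map_add' q q' := by
    simp only [Submodule.coe_add, eval_add, mul_add]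
    exact intervalIntegral.integral_add (h _) (h _)
  map_smul' c q := by
    dsimp only [RingHom.id_apply]
    rw [← intervalIntegral.integral_smul]
    congr 1
    funext x
    simp only [SetLike.val_smul, Polynomial.eval_smul, smul_eq_mul]
    ring

lemma Bmap_surjective (a b : ℝ) (hab : a < b) (n : ℕ) :
    Function.Surjective (Bmap a b n) := by
  have : FiniteDimensional ℝ (degreeLT ℝ n) :=
    Module.Finite.equiv (Polynomial.degreeLTEquiv ℝ n).symm
  have hfr : Module.finrank ℝ (degreeLT ℝ n)
      = Module.finrank ℝ (Module.Dual ℝ (degreeLT ℝ n)) :=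
    (Subspace.dual_finrank_eq).symm
  have hinj : Function.Injective (Bmap a b n) := by
    rw [← LinearMap.ker_eq_bot, LinearMap.ker_eq_bot']
    intro p hp
    have h0 : (Bmap a b n) p p = 0 := by rw [hp]; rfl
    have : (p : Polynomial ℝ) = 0 := poly_eq_zero_of_integral_sq hab _ h0
    exact Subtype.ext this
  exact (LinearMap.injective_iff_surjective_of_finrank_eq_finrank hfr).mp hinj



/-- Existence and uniqueness of the projection `π_h u`: for `u ∈ H¹(x_i, x_{i+1})`
and `k ≥ 0`, `r = k+1`, there is a unique polynomial `p ∈ P_{k+1}` such that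
`(p', q) = (u', q)` for all `q ∈ P_k` and `p` interpolates `u` at both endpoints. -/
theorem stmt9 (xi xi1 : ℝ) (hx : xi < xi1) (k : ℕ) (u du : ℝ → ℝ)
    (hu : ∀ x ∈ Set.Icc xi xi1, HasDerivWithinAt u (du x) (Set.Icc xi xi1) x)
    (hdu : IntervalIntegrable du MeasureTheory.volume xi xi1)
    (hdu' : ∀ q : Polynomial ℝ,
      IntervalIntegrable (fun x => du x * q.eval x) MeasureTheory.volume xi xi1) :
    ∃! p : Polynomial ℝ, p.natDegree ≤ k + 1 ∧
      (∀ q : Polynomial ℝ, q.natDegree ≤ k →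
        ∫ x in xi..xi1, p.derivative.eval x * q.eval x
          = ∫ x in xi..xi1, du x * q.eval x) ∧
      p.eval xi = u xi ∧ p.eval xi1 = u xi1 := by
  have hucont : ContinuousOn u (Icc xi xi1) := fun x hx' => (hu x hx').continuousWithinAt
  have hftc_u : ∫ x in xi..xi1, du x = u xi1 - u xi := by
    refine intervalIntegral.integral_eq_sub_of_hasDeriv_right_of_le hx.le hucont
      (fun x hx' => (hu x (Ioo_subset_Icc_self hx')).mono_of_mem_nhdsWithin ?_) hdu
    refine Filter.mem_of_superset (Ioc_mem_nhdsGT_of_mem ⟨le_refl x, hx'.2⟩) ?_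
    exact Ioc_subset_Icc_self.trans (Icc_subset_Icc hx'.1.le le_rfl)
  obtain ⟨g', hg'⟩ := Bmap_surjective xi xi1 hx (k + 1) (Lmap xi xi1 du (k + 1) hdu')
  set g : Polynomial ℝ := (g' : Polynomial ℝ) with hg
  have hgdeg : g.natDegree ≤ k := by
    have hmem : g.degree < ((k + 1 : ℕ) : WithBot ℕ) := Polynomial.mem_degreeLT.mp g'.2
    by_cases h0 : g = 0
    · simp [h0]
    · have := (Polynomial.natDegree_lt_iff_degree_lt h0).mpr hmem
      omega
  have hgint : ∀ q : Polynomial ℝ, q.natDegree ≤ k →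
      (∫ x in xi..xi1, g.eval x * q.eval x) = ∫ x in xi..xi1, du x * q.eval x := by
    intro q hq
    have hqmem : q ∈ degreeLT ℝ (k + 1) := by
      rw [Polynomial.mem_degreeLT]
      calc q.degree ≤ (q.natDegree : WithBot ℕ) := Polynomial.degree_le_natDegree
        _ < ((k + 1 : ℕ) : WithBot ℕ) := by exact_mod_cast Nat.lt_succ_of_le hq
    exact LinearMap.congr_fun hg' ⟨q, hqmem⟩
  set P0 := pAntider g with hP0
  set p := P0 + C (u xi - P0.eval xi) with hp
  have hpderiv : derivative p = g := by
    rw [hp, derivative_add, derivative_C, add_zero, hP0, pAntider_derivative]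
  have hpdeg : p.natDegree ≤ k + 1 := by
    refine (natDegree_add_le _ _).trans (max_le ?_ ?_)
    · exact (pAntider_natDegree g).trans (by omega)
    · simp
  have hpxi : p.eval xi = u xi := by simp [hp]
  have hmom : ∀ q : Polynomial ℝ, q.natDegree ≤ k →
      (∫ x in xi..xi1, p.derivative.eval x * q.eval x) = ∫ x in xi..xi1, du x * q.eval x := by
    intro q hq
    rw [hpderiv]
    exact hgint q hq
  have hftc_p : ∫ x in xi..xi1, p.derivative.eval x = p.eval xi1 - p.eval xi := by
    refine intervalIntegral.integral_eq_sub_of_hasDerivAt (fun x _ => p.hasDerivAt x) ?_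
    exact (p.derivative.continuous).intervalIntegrable _ _
  have hint1 : (∫ x in xi..xi1, p.derivative.eval x) = ∫ x in xi..xi1, du x := by
    have := hmom 1 (by simp)
    simpa using this
  have hpxi1 : p.eval xi1 = u xi1 := by
    rw [hint1, hftc_u, hpxi] at hftc_p
    linarith
  refine ⟨p, ⟨hpdeg, hmom, hpxi, hpxi1⟩, ?_⟩
  rintro p1 ⟨h1deg, h1mom, h1xi, h1xi1⟩
  set d := derivative p1 - derivative p with hd
  have hddeg : d.natDegree ≤ k := by
    refine (natDegree_sub_le _ _).trans (max_le ?_ ?_)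
    · exact (natDegree_derivative_le _).trans (by omega)
    · exact (natDegree_derivative_le _).trans (by omega)
  have hzero : (∫ x in xi..xi1, d.eval x * d.eval x) = 0 := by
    have e1 := h1mom d hddeg
    have e2 := hmom d hddeg
    have heq : ∫ x in xi..xi1, d.eval x * d.eval x
        = (∫ x in xi..xi1, (derivative p1).eval x * d.eval x)
          - ∫ x in xi..xi1, (derivative p).eval x * d.eval x := by
      rw [← intervalIntegral.integral_sub (polyMulIntegrable _ _ _ _) (polyMulIntegrable _ _ _ _)]
      congr 1
      funext x
      simp only [hd, eval_sub]
      ring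
    rw [heq, e1, e2, sub_self]
  have hd0 : d = 0 := poly_eq_zero_of_integral_sq hx _ hzero
  have hC : p1 - p = C ((p1 - p).coeff 0) :=
    Polynomial.eq_C_of_derivative_eq_zero (by rw [derivative_sub, ← hd, hd0])
  have hev := congrArg (Polynomial.eval xi) hC
  rw [eval_sub, h1xi, hpxi, sub_self, eval_C] at hev
  have hsub : p1 - p = 0 := by rw [hC, ← hev, map_zero]
  exact sub_eq_zero.mp hsub
end

section
/- Stability of the fully discrete WG scheme: if U_n ∈ S_h⁰ satisfies (∂̄_t U_n⁰, v⁰)_h + ν(d_{w,r}U_n, d_{w,r}v)_h + (1/3)(U_n⁰ d_{w,r}U_n, v⁰)_h − (1/3)(U_n⁰U_n⁰, d_{w,r}v)_h = 0 for all v ∈ S_h⁰, then ‖U_n⁰‖_h² + 2τν‖d_{w,r}U_n‖_h² ≤ ‖U_{n-1}⁰‖_h². -/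
/-- Stability of the fully discrete WG scheme for Burgers' equation: if `U_n ∈ S_h⁰`
(interior components `U0 i ∈ P_k`, nodal values `Un` vanishing at the boundary,
discrete weak derivative `dU i ∈ P_{k+1}`) satisfies
`(∂̄_t U_n⁰, v⁰)_h + ν(d_w U_n, d_w v)_h + ⅓(U_n⁰ d_w U_n, v⁰)_h − ⅓(U_n⁰U_n⁰, d_w v)_h = 0`
for all `v ∈ S_h⁰`, where `∂̄_t U_n = (U_n − U_{n−1})/τ`, then
`‖U_n⁰‖_h² + 2τν‖d_w U_n‖_h² ≤ ‖U_{n−1}⁰‖_h²`. -/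
theorem stmt11 (N k : ℕ) (hN : 2 ≤ N) (x : ℕ → ℝ)
    (hmono : ∀ i, 1 ≤ i → i < N → x i < x (i+1))
    (τ ν : ℝ) (hτ : 0 < τ) (hν : 0 < ν)
    (U0 P0 : ℕ → Polynomial ℝ) (hU0deg : ∀ i, (U0 i).natDegree ≤ k)
    (hP0deg : ∀ i, (P0 i).natDegree ≤ k)
    (Un : ℕ → ℝ) (hUn1 : Un 1 = 0) (hUnN : Un N = 0)
    (dU : ℕ → Polynomial ℝ) (hdUdeg : ∀ i, (dU i).natDegree ≤ k + 1)
    (hdU : ∀ i, 1 ≤ i → i < N → ∀ q : Polynomial ℝ, q.natDegree ≤ k + 1 →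
      ∫ t in (x i)..(x (i+1)), (dU i).eval t * q.eval t
        = -(∫ t in (x i)..(x (i+1)), (U0 i).eval t * q.derivative.eval t)
          + Un (i+1) * q.eval (x (i+1)) - Un i * q.eval (x i))
    (hscheme : ∀ (v0 : ℕ → Polynomial ℝ), (∀ i, (v0 i).natDegree ≤ k) →
      ∀ (vn : ℕ → ℝ), vn 1 = 0 → vn N = 0 →
      ∀ (dv : ℕ → Polynomial ℝ), (∀ i, (dv i).natDegree ≤ k + 1) →
      (∀ i, 1 ≤ i → i < N → ∀ q : Polynomial ℝ, q.natDegree ≤ k + 1 →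
        ∫ t in (x i)..(x (i+1)), (dv i).eval t * q.eval t
          = -(∫ t in (x i)..(x (i+1)), (v0 i).eval t * q.derivative.eval t)
            + vn (i+1) * q.eval (x (i+1)) - vn i * q.eval (x i)) →
      (1/τ) * ∑ i ∈ Finset.Icc 1 (N-1),
          (∫ t in (x i)..(x (i+1)), ((U0 i).eval t - (P0 i).eval t) * (v0 i).eval t)
        + ν * ∑ i ∈ Finset.Icc 1 (N-1),
            (∫ t in (x i)..(x (i+1)), (dU i).eval t * (dv i).eval t)
        + (1/3) * ∑ i ∈ Finset.Icc 1 (N-1),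
            (∫ t in (x i)..(x (i+1)), (U0 i).eval t * (dU i).eval t * (v0 i).eval t)
        - (1/3) * ∑ i ∈ Finset.Icc 1 (N-1),
            (∫ t in (x i)..(x (i+1)), (U0 i).eval t * (U0 i).eval t * (dv i).eval t)
        = 0) :
    ∑ i ∈ Finset.Icc 1 (N-1), (∫ t in (x i)..(x (i+1)), ((U0 i).eval t)^2)
      + 2 * τ * ν * ∑ i ∈ Finset.Icc 1 (N-1), (∫ t in (x i)..(x (i+1)), ((dU i).eval t)^2)
      ≤ ∑ i ∈ Finset.Icc 1 (N-1), (∫ t in (x i)..(x (i+1)), ((P0 i).eval t)^2) := by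

  have key := hscheme U0 hU0deg Un hUn1 hUnN dU hdUdeg hdU
  have hint : ∀ (p q : Polynomial ℝ) (a b : ℝ),
      IntervalIntegrable (fun t => p.eval t * q.eval t) MeasureTheory.volume a b :=
    fun p q a b => ((p.continuous_aeval).mul q.continuous_aeval).intervalIntegrable a b
  -- cancel the nonlinear terms
  have hcancel : ∀ i, (∫ t in (x i)..(x (i+1)), (U0 i).eval t * (dU i).eval t * (U0 i).eval t)
      = ∫ t in (x i)..(x (i+1)), (U0 i).eval t * (U0 i).eval t * (dU i).eval t := by
    intro i
    apply intervalIntegral.integral_congr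
    intro t _; ring
  rw [Finset.sum_congr rfl (fun i _ => hcancel i)] at key
  have key2 : (1/τ) * ∑ i ∈ Finset.Icc 1 (N-1),
        (∫ t in (x i)..(x (i+1)), ((U0 i).eval t - (P0 i).eval t) * (U0 i).eval t)
      + ν * ∑ i ∈ Finset.Icc 1 (N-1),
          (∫ t in (x i)..(x (i+1)), (dU i).eval t * (dU i).eval t) = 0 := by
    linarith [key]
  -- split the first sum
  have hsplit : ∀ i, (∫ t in (x i)..(x (i+1)), ((U0 i).eval t - (P0 i).eval t) * (U0 i).eval t)
      = (∫ t in (x i)..(x (i+1)), ((U0 i).eval t)^2)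
        - (∫ t in (x i)..(x (i+1)), (P0 i).eval t * (U0 i).eval t) := by
    intro i
    rw [← intervalIntegral.integral_sub]
    · apply intervalIntegral.integral_congr
      intro t _; ring
    · have := hint (U0 i) (U0 i) (x i) (x (i+1))
      simpa [pow_two] using this
    · exact hint (P0 i) (U0 i) (x i) (x (i+1))
  have hsq : ∀ i, (∫ t in (x i)..(x (i+1)), (dU i).eval t * (dU i).eval t)
      = ∫ t in (x i)..(x (i+1)), ((dU i).eval t)^2 := by
    intro i
    apply intervalIntegral.integral_congr
    intro t _; ring
  rw [Finset.sum_congr rfl (fun i _ => hsplit i),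
      Finset.sum_congr rfl (fun i _ => hsq i), Finset.sum_sub_distrib] at key2
  set SU : ℝ := ∑ i ∈ Finset.Icc 1 (N-1), (∫ t in (x i)..(x (i+1)), ((U0 i).eval t)^2) with hSU
  set SP : ℝ := ∑ i ∈ Finset.Icc 1 (N-1), (∫ t in (x i)..(x (i+1)), ((P0 i).eval t)^2) with hSP
  set SD : ℝ := ∑ i ∈ Finset.Icc 1 (N-1), (∫ t in (x i)..(x (i+1)), ((dU i).eval t)^2) with hSD
  set SPU : ℝ := ∑ i ∈ Finset.Icc 1 (N-1),
      (∫ t in (x i)..(x (i+1)), (P0 i).eval t * (U0 i).eval t) with hSPU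
  -- key2 : (1/τ) * (SU - SPU) + ν * SD = 0
  have h3 : SU - SPU = -(τ * ν * SD) := by
    have h : τ * ((1/τ) * (SU - SPU) + ν * SD) = 0 := by rw [key2]; ring
    have hτ' : τ ≠ 0 := ne_of_gt hτ
    field_simp at h
    linarith
  -- Cauchy–Schwarz via nonnegativity of ∫ (P0 - U0)^2
  have hnn : 0 ≤ SP - 2 * SPU + SU := by
    have : ∀ i ∈ Finset.Icc 1 (N-1),
        0 ≤ (∫ t in (x i)..(x (i+1)), ((P0 i).eval t - (U0 i).eval t)^2) := by
      intro i hi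
      rw [Finset.mem_Icc] at hi
      have hle : x i ≤ x (i+1) := le_of_lt (hmono i hi.1 (by omega))
      apply intervalIntegral.integral_nonneg hle
      intro t _; positivity
    have hterm : ∀ i, (∫ t in (x i)..(x (i+1)), ((P0 i).eval t - (U0 i).eval t)^2)
        = (∫ t in (x i)..(x (i+1)), ((P0 i).eval t)^2)
          - 2 * (∫ t in (x i)..(x (i+1)), (P0 i).eval t * (U0 i).eval t)
          + (∫ t in (x i)..(x (i+1)), ((U0 i).eval t)^2) := by
      intro i
      have h1 := hint (P0 i) (P0 i) (x i) (x (i+1))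
      have h2 := hint (P0 i) (U0 i) (x i) (x (i+1))
      have h3 := hint (U0 i) (U0 i) (x i) (x (i+1))
      rw [show (∫ t in (x i)..(x (i+1)), ((P0 i).eval t - (U0 i).eval t)^2)
          = ∫ t in (x i)..(x (i+1)),
              ((P0 i).eval t * (P0 i).eval t - 2 * ((P0 i).eval t * (U0 i).eval t)
                + (U0 i).eval t * (U0 i).eval t) from
          intervalIntegral.integral_congr (fun t _ => by ring),
        intervalIntegral.integral_add (h1.sub (h2.const_mul 2)) h3,
        intervalIntegral.integral_sub h1 (h2.const_mul 2),
        intervalIntegral.integral_const_mul]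
      simp [pow_two]
    have hsum := Finset.sum_nonneg this
    rw [Finset.sum_congr rfl (fun i _ => hterm i), Finset.sum_add_distrib,
        Finset.sum_sub_distrib, ← Finset.mul_sum] at hsum
    rw [hSP, hSPU, hSU]
    linarith
  have hD : 0 ≤ SD := by
    apply Finset.sum_nonneg
    intro i hi
    rw [Finset.mem_Icc] at hi
    have hle : x i ≤ x (i+1) := le_of_lt (hmono i hi.1 (by omega))
    apply intervalIntegral.integral_nonneg hle
    intro t _; positivity
  nlinarith [mul_pos hτ hν]
end

section
/- Semi-discrete energy identity: if u_h(t) ∈ S_h⁰ solves the semi-discrete WG scheme ((u_h⁰)_t, v⁰)_h + ν(d_{w,r}u_h, d_{w,r}v)_h + (1/3)(u_h⁰ d_{w,r}u_h, v⁰)_h − (1/3)(u_h⁰u_h⁰, d_{w,r}v)_h = 0 for all v ∈ S_h⁰, then ‖u_h⁰(t)‖_h² + 2ν ∫₀ᵗ ‖d_{w,r}u_h(s)‖_h² ds = ‖u_h⁰(0)‖_h² for all t ∈ [0,T]. -/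
set_option maxHeartbeats 1000000
open MeasureTheory intervalIntegral Set

lemma ftc_icc {F F' : ℝ → ℝ} {T t : ℝ} (h0 : 0 ≤ t) (htT : t ≤ T)
    (hF : ∀ s ∈ Set.Icc (0:ℝ) T, HasDerivWithinAt F (F' s) (Set.Icc (0:ℝ) T) s)
    (hF' : ContinuousOn F' (Set.Icc (0:ℝ) T)) :
    F t = F 0 + ∫ s in (0:ℝ)..t, F' s := by
  have hsub : Set.Icc (0:ℝ) t ⊆ Set.Icc (0:ℝ) T := Set.Icc_subset_Icc_right htT
  have hcF : ContinuousOn F (Set.Icc (0:ℝ) t) :=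
    fun s hs => ((hF s (hsub hs)).continuousWithinAt).mono hsub
  have key := intervalIntegral.integral_eq_sub_of_hasDeriv_right_of_le h0 hcF
    (fun s hs => (hF s ⟨hs.1.le, hs.2.le.trans htT⟩).mono_of_mem_nhdsWithin
      (Icc_mem_nhdsGT_of_mem ⟨hs.1.le, lt_of_lt_of_le hs.2 htT⟩))
    (((hF'.mono hsub)).intervalIntegrable_of_Icc h0)
  linarith [key]

lemma fubini_rect {G : ℝ → ℝ → ℝ} (hG : Continuous fun p : ℝ × ℝ => G p.1 p.2)
    {t a b : ℝ} (ht : 0 ≤ t) (hab : a ≤ b) :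
    ∫ y in a..b, ∫ s in (0:ℝ)..t, G s y = ∫ s in (0:ℝ)..t, ∫ y in a..b, G s y := by
  rw [intervalIntegral.integral_of_le ht, intervalIntegral.integral_of_le hab]
  simp only [intervalIntegral.integral_of_le ht, intervalIntegral.integral_of_le hab]
  have hint : Integrable (Function.uncurry fun y s => G s y)
      ((volume.restrict (Set.Ioc a b)).prod (volume.restrict (Set.Ioc (0:ℝ) t))) := by
    rw [Measure.prod_restrict]
    have hc : Continuous fun p : ℝ × ℝ => G p.2 p.1 := hG.comp (continuous_snd.prodMk continuous_fst)
    have : IntegrableOn (fun p : ℝ × ℝ => G p.2 p.1) (Set.Icc a b ×ˢ Set.Icc 0 t) :=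
      hc.continuousOn.integrableOn_compact (isCompact_Icc.prod isCompact_Icc)
    exact this.mono_set (Set.prod_mono Set.Ioc_subset_Icc_self Set.Ioc_subset_Icc_self)
  exact MeasureTheory.integral_integral_swap hint

/-- continuous extension of a continuous-on-a-rectangle function by clamping. -/
lemma clamp_ext {T a b : ℝ} (hT : (0:ℝ) ≤ T) (hab : a ≤ b) (ft : ℝ → ℝ → ℝ)
    (hc : ContinuousOn (fun p : ℝ × ℝ => ft p.1 p.2) (Set.Icc 0 T ×ˢ Set.Icc a b)) :
    ∃ Ft : ℝ → ℝ → ℝ, (Continuous fun p : ℝ × ℝ => Ft p.1 p.2) ∧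
      ∀ s ∈ Set.Icc (0:ℝ) T, ∀ y ∈ Set.Icc a b, Ft s y = ft s y := by
  refine ⟨fun s y => ft (Set.projIcc 0 T hT s : ℝ) (Set.projIcc a b hab y : ℝ), ?_, ?_⟩
  · show Continuous ((fun p : ℝ × ℝ => ft p.1 p.2) ∘ fun p : ℝ × ℝ =>
      ((Set.projIcc 0 T hT p.1 : ℝ), (Set.projIcc a b hab p.2 : ℝ)))
    exact hc.comp_continuous
      (((continuous_subtype_val.comp continuous_projIcc).comp continuous_fst).prodMk
        ((continuous_subtype_val.comp continuous_projIcc).comp continuous_snd))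
      (fun p => ⟨(Set.projIcc 0 T hT p.1).2, (Set.projIcc a b hab p.2).2⟩)
  · intro s hs y hy
    simp only [Set.projIcc_of_mem hT hs, Set.projIcc_of_mem hab hy]

/-- Energy evolution for one element. -/
lemma energy_elem {T a b : ℝ} (hT : 0 < T) (hab : a ≤ b) (f ft : ℝ → ℝ → ℝ)
    (hd : ∀ y, ∀ s ∈ Set.Icc (0:ℝ) T, HasDerivWithinAt (fun s => f s y) (ft s y) (Set.Icc (0:ℝ) T) s)
    (hc : ContinuousOn (fun p : ℝ × ℝ => ft p.1 p.2) (Set.Icc 0 T ×ˢ Set.Icc a b))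
    (hfy : ∀ s, Continuous (f s)) :
    ∃ ψ : ℝ → ℝ, Continuous ψ ∧
      (∀ s ∈ Set.Icc (0:ℝ) T, ψ s = 2 * ∫ y in a..b, ft s y * f s y) ∧
      (∀ t ∈ Set.Icc (0:ℝ) T,
        (∫ y in a..b, (f t y)^2) = (∫ y in a..b, (f 0 y)^2) + ∫ s in (0:ℝ)..t, ψ s) := by
  classical
  obtain ⟨Ft, hFtc, hFteq⟩ := clamp_ext hT.le hab ft hc
  -- continuity in s of ft at fixed y in [a,b]
  have hftsy : ∀ y ∈ Set.Icc a b, ContinuousOn (fun s => ft s y) (Set.Icc (0:ℝ) T) := by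
    intro y hy
    exact hc.comp ((continuous_id.prodMk continuous_const).continuousOn) (fun s hs => ⟨hs, hy⟩)
  -- continuous extension F of f
  obtain ⟨F, hFc, hFeq⟩ : ∃ F : ℝ → ℝ → ℝ, (Continuous fun p : ℝ × ℝ => F p.1 p.2) ∧
      ∀ s ∈ Set.Icc (0:ℝ) T, ∀ y ∈ Set.Icc a b, F s y = f s y := by
    refine ⟨fun s y => f 0 y + ∫ τ in (0:ℝ)..(Set.projIcc 0 T hT.le s : ℝ), Ft τ y, ?_, ?_⟩
    · apply ((hfy 0).comp continuous_snd).add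
      have hu : Continuous (Function.uncurry fun (p : ℝ × ℝ) τ => Ft τ p.2) :=
        hFtc.comp (continuous_snd.prodMk (continuous_snd.comp continuous_fst))
      exact intervalIntegral.continuous_parametric_intervalIntegral_of_continuous (μ := volume)
        (f := fun (p : ℝ × ℝ) τ => Ft τ p.2) hu
        (s := fun p : ℝ × ℝ => (Set.projIcc 0 T hT.le p.1 : ℝ))
        ((continuous_subtype_val.comp continuous_projIcc).comp continuous_fst)
    · intro s hs y hy
      have h1 : (∫ τ in (0:ℝ)..(Set.projIcc 0 T hT.le s : ℝ), Ft τ y)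
          = ∫ τ in (0:ℝ)..s, ft τ y := by
        rw [Set.projIcc_of_mem hT.le hs]
        apply intervalIntegral.integral_congr
        intro τ hτ
        rw [Set.uIcc_of_le hs.1] at hτ
        exact hFteq τ ⟨hτ.1, hτ.2.trans hs.2⟩ y hy
      have h2 : f s y = f 0 y + ∫ τ in (0:ℝ)..s, ft τ y :=
        ftc_icc hs.1 hs.2 (hd y) (hftsy y hy)
      dsimp only; rw [h1, ← h2]
  -- the integrand g
  obtain ⟨g, hgc, hgeq⟩ : ∃ g : ℝ → ℝ → ℝ, (Continuous fun p : ℝ × ℝ => g p.1 p.2) ∧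
      ∀ s ∈ Set.Icc (0:ℝ) T, ∀ y ∈ Set.Icc a b, g s y = 2 * ft s y * f s y := by
    refine ⟨fun s y => 2 * Ft s y * F s y, (continuous_const.mul hFtc).mul hFc, ?_⟩
    intro s hs y hy
    show 2 * Ft s y * F s y = 2 * ft s y * f s y
    rw [hFteq s hs y hy, hFeq s hs y hy]
  refine ⟨fun s => ∫ y in a..b, g s y, ?_, ?_, ?_⟩
  · exact intervalIntegral.continuous_parametric_intervalIntegral_of_continuous' (μ := volume)
      hgc a b
  · intro s hs
    rw [← intervalIntegral.integral_const_mul]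
    apply intervalIntegral.integral_congr
    intro y hy
    rw [Set.uIcc_of_le hab] at hy
    rw [hgeq s hs y hy]; ring
  · intro t ht
    have hsub : Set.Icc (0:ℝ) t ⊆ Set.Icc (0:ℝ) T := Set.Icc_subset_Icc_right ht.2
    have hyFTC : ∀ y ∈ Set.Icc a b,
        (f t y)^2 = (f 0 y)^2 + ∫ s in (0:ℝ)..t, g s y := by
      intro y hy
      have hdsq : ∀ s ∈ Set.Icc (0:ℝ) T,
          HasDerivWithinAt (fun s => (f s y)^2) (2 * ft s y * f s y) (Set.Icc (0:ℝ) T) s := by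
        intro s hs
        have h1 := (hd y s hs).mul (hd y s hs)
        have h2 : ft s y * f s y + f s y * ft s y = 2 * ft s y * f s y := by ring
        have h3 : (fun s => f s y * f s y) = fun s => (f s y)^2 := by funext u; ring
        rw [← h3, ← h2]; exact h1
      have hcsq : ContinuousOn (fun s => 2 * ft s y * f s y) (Set.Icc (0:ℝ) T) :=
        (continuousOn_const.mul (hftsy y hy)).mul
          (fun s hs => ((hd y s hs).continuousWithinAt))
      rw [ftc_icc ht.1 ht.2 hdsq hcsq]
      congr 1
      apply intervalIntegral.integral_congr
      intro s hs
      rw [Set.uIcc_of_le ht.1] at hs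
      exact (hgeq s (hsub hs) y hy).symm
    have hi1 : (∫ y in a..b, (f t y)^2)
        = ∫ y in a..b, ((f 0 y)^2 + ∫ s in (0:ℝ)..t, g s y) := by
      apply intervalIntegral.integral_congr
      intro y hy
      rw [Set.uIcc_of_le hab] at hy
      exact hyFTC y hy
    rw [hi1]
    have hii : IntervalIntegrable (fun y => (f 0 y)^2) volume a b :=
      Continuous.intervalIntegrable (by exact (hfy 0).pow 2) a b
    have hgi : IntervalIntegrable (fun y => ∫ s in (0:ℝ)..t, g s y) volume a b := by
      apply Continuous.intervalIntegrable
      exact intervalIntegral.continuous_parametric_intervalIntegral_of_continuous' (μ := volume)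
        (f := fun y s => g s y) (hgc.comp (continuous_snd.prodMk continuous_fst)) 0 t
    rw [intervalIntegral.integral_add hii hgi]
    congr 1
    exact fubini_rect hgc ht.1 hab



/-- Semi-discrete energy identity: if `u_h(t) ∈ S_h⁰` (interior components
`u0 i t ∈ P_k` elementwise, nodal values `un` vanishing at the boundary, discrete
weak derivative `du i t ∈ P_{k+1}`) solves the semi-discrete WG scheme
`((u_h⁰)_t, v⁰)_h + ν(d_w u_h, d_w v)_h + ⅓(u_h⁰ d_w u_h, v⁰)_h − ⅓(u_h⁰u_h⁰, d_w v)_h = 0`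
for all `v ∈ S_h⁰` and `t ∈ [0,T]`, then
`‖u_h⁰(t)‖_h² + 2ν ∫₀ᵗ ‖d_w u_h(s)‖_h² ds = ‖u_h⁰(0)‖_h²` for all `t ∈ [0,T]`. -/
theorem stmt16 (N k : ℕ) (hN : 2 ≤ N) (x : ℕ → ℝ)
    (hmono : ∀ i, 1 ≤ i → i < N → x i < x (i+1))
    (ν T : ℝ) (hν : 0 < ν) (hT : 0 < T)
    (u0 u0t du : ℕ → ℝ → ℝ → ℝ) (un : ℕ → ℝ → ℝ)
    (hpoly : ∀ i t, ∃ p : Polynomial ℝ, p.natDegree ≤ k ∧ ∀ y, u0 i t y = p.eval y)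
    (hdupoly : ∀ i t, ∃ p : Polynomial ℝ, p.natDegree ≤ k + 1 ∧ ∀ y, du i t y = p.eval y)
    (hun1 : ∀ t, un 1 t = 0) (hunN : ∀ t, un N t = 0)
    (hderiv : ∀ i y, ∀ t ∈ Set.Icc (0:ℝ) T,
      HasDerivWithinAt (fun s => u0 i s y) (u0t i t y) (Set.Icc (0:ℝ) T) t)
    (hcont : ∀ i, ContinuousOn (fun p : ℝ × ℝ => u0t i p.1 p.2)
      (Set.Icc 0 T ×ˢ Set.Icc (x i) (x (i+1))))
    (hdcont : ∀ i, ContinuousOn (fun p : ℝ × ℝ => du i p.1 p.2)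
      (Set.Icc 0 T ×ˢ Set.Icc (x i) (x (i+1))))
    (hdu : ∀ t ∈ Set.Icc (0:ℝ) T, ∀ i, 1 ≤ i → i < N →
      ∀ q : Polynomial ℝ, q.natDegree ≤ k + 1 →
      ∫ y in (x i)..(x (i+1)), du i t y * q.eval y
        = -(∫ y in (x i)..(x (i+1)), u0 i t y * q.derivative.eval y)
          + un (i+1) t * q.eval (x (i+1)) - un i t * q.eval (x i))
    (hscheme : ∀ t ∈ Set.Icc (0:ℝ) T,
      ∀ (v0 : ℕ → Polynomial ℝ), (∀ i, (v0 i).natDegree ≤ k) →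
      ∀ (vn : ℕ → ℝ), vn 1 = 0 → vn N = 0 →
      ∀ (dv : ℕ → Polynomial ℝ), (∀ i, (dv i).natDegree ≤ k + 1) →
      (∀ i, 1 ≤ i → i < N → ∀ q : Polynomial ℝ, q.natDegree ≤ k + 1 →
        ∫ y in (x i)..(x (i+1)), (dv i).eval y * q.eval y
          = -(∫ y in (x i)..(x (i+1)), (v0 i).eval y * q.derivative.eval y)
            + vn (i+1) * q.eval (x (i+1)) - vn i * q.eval (x i)) →
      ∑ i ∈ Finset.Icc 1 (N-1), (∫ y in (x i)..(x (i+1)), u0t i t y * (v0 i).eval y)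
        + ν * ∑ i ∈ Finset.Icc 1 (N-1),
            (∫ y in (x i)..(x (i+1)), du i t y * (dv i).eval y)
        + (1/3) * ∑ i ∈ Finset.Icc 1 (N-1),
            (∫ y in (x i)..(x (i+1)), u0 i t y * du i t y * (v0 i).eval y)
        - (1/3) * ∑ i ∈ Finset.Icc 1 (N-1),
            (∫ y in (x i)..(x (i+1)), u0 i t y * u0 i t y * (dv i).eval y)
        = 0) :
    ∀ t ∈ Set.Icc (0:ℝ) T,
      ∑ i ∈ Finset.Icc 1 (N-1), (∫ y in (x i)..(x (i+1)), (u0 i t y)^2)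
        + 2 * ν * (∫ s in (0:ℝ)..t,
            ∑ i ∈ Finset.Icc 1 (N-1), (∫ y in (x i)..(x (i+1)), (du i s y)^2))
        = ∑ i ∈ Finset.Icc 1 (N-1), (∫ y in (x i)..(x (i+1)), (u0 i 0 y)^2) := by
  classical
  have hrange : ∀ i ∈ Finset.Icc 1 (N-1), 1 ≤ i ∧ i < N := by
    intro i hi
    rw [Finset.mem_Icc] at hi
    omega
  -- continuity of u0 in y
  have hfy : ∀ i s, Continuous (u0 i s) := by
    intro i s
    obtain ⟨p, _, hp⟩ := hpoly i s
    have : u0 i s = fun y => p.eval y := funext hp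
    rw [this]
    exact p.continuous
  -- Step A : energy balance at each time
  have keyA : ∀ s ∈ Set.Icc (0:ℝ) T,
      ∑ i ∈ Finset.Icc 1 (N-1), (∫ y in (x i)..(x (i+1)), u0t i s y * u0 i s y)
        = -(ν * ∑ i ∈ Finset.Icc 1 (N-1), ∫ y in (x i)..(x (i+1)), (du i s y)^2) := by
    intro s hs
    have e0 : ∀ i y, Polynomial.eval y (hpoly i s).choose = u0 i s y :=
      fun i y => ((hpoly i s).choose_spec.2 y).symm
    have e1 : ∀ i y, Polynomial.eval y (hdupoly i s).choose = du i s y :=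
      fun i y => ((hdupoly i s).choose_spec.2 y).symm
    have hweak : ∀ i, 1 ≤ i → i < N → ∀ q : Polynomial ℝ, q.natDegree ≤ k + 1 →
        ∫ y in (x i)..(x (i+1)), Polynomial.eval y ((hdupoly i s).choose) * q.eval y
          = -(∫ y in (x i)..(x (i+1)),
                Polynomial.eval y ((hpoly i s).choose) * q.derivative.eval y)
            + un (i+1) s * q.eval (x (i+1)) - un i s * q.eval (x i) := by
      intro i h1 h2 q hq
      simp only [e0, e1]
      exact hdu s hs i h1 h2 q hq
    have h := hscheme s hs (fun i => (hpoly i s).choose)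
      (fun i => (hpoly i s).choose_spec.1) (fun i => un i s) (hun1 s) (hunN s)
      (fun i => (hdupoly i s).choose) (fun i => (hdupoly i s).choose_spec.1) hweak
    simp only [e0, e1] at h
    have hCC : (∑ i ∈ Finset.Icc 1 (N-1),
          ∫ y in (x i)..(x (i+1)), u0 i s y * du i s y * u0 i s y)
        = ∑ i ∈ Finset.Icc 1 (N-1),
          ∫ y in (x i)..(x (i+1)), u0 i s y * u0 i s y * du i s y :=
      Finset.sum_congr rfl fun i _ =>
        intervalIntegral.integral_congr fun y _ => by ring
    have hBB : (∑ i ∈ Finset.Icc 1 (N-1),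
          ∫ y in (x i)..(x (i+1)), du i s y * du i s y)
        = ∑ i ∈ Finset.Icc 1 (N-1), ∫ y in (x i)..(x (i+1)), (du i s y)^2 :=
      Finset.sum_congr rfl fun i _ =>
        intervalIntegral.integral_congr fun y _ => (pow_two _).symm
    rw [hCC, hBB] at h
    linarith
  -- Step B : per-element energy evolution
  have hEX : ∀ i : ℕ, ∃ ψ : ℝ → ℝ, 1 ≤ i → i < N →
      Continuous ψ ∧
      (∀ s ∈ Set.Icc (0:ℝ) T,
        ψ s = 2 * ∫ y in (x i)..(x (i+1)), u0t i s y * u0 i s y) ∧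
      (∀ t ∈ Set.Icc (0:ℝ) T,
        (∫ y in (x i)..(x (i+1)), (u0 i t y)^2)
          = (∫ y in (x i)..(x (i+1)), (u0 i 0 y)^2) + ∫ s in (0:ℝ)..t, ψ s) := by
    intro i
    by_cases hi : 1 ≤ i ∧ i < N
    · obtain ⟨ψ, h1, h2, h3⟩ := energy_elem hT (hmono i hi.1 hi.2).le (u0 i) (u0t i)
        (fun y s hs => hderiv i y s hs) (hcont i) (hfy i)
      exact ⟨ψ, fun _ _ => ⟨h1, h2, h3⟩⟩
    · exact ⟨fun _ => 0, fun h1 h2 => absurd ⟨h1, h2⟩ hi⟩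
  choose ψ hψ using hEX
  intro t ht
  -- energy identity summed over elements
  have hEt : ∑ i ∈ Finset.Icc 1 (N-1), (∫ y in (x i)..(x (i+1)), (u0 i t y)^2)
      = ∑ i ∈ Finset.Icc 1 (N-1), (∫ y in (x i)..(x (i+1)), (u0 i 0 y)^2)
        + ∑ i ∈ Finset.Icc 1 (N-1), ∫ s in (0:ℝ)..t, ψ i s := by
    rw [← Finset.sum_add_distrib]
    refine Finset.sum_congr rfl fun i hi => ?_
    obtain ⟨h1, h2⟩ := hrange i hi
    exact (hψ i h1 h2).2.2 t ht
  have hswap : ∑ i ∈ Finset.Icc 1 (N-1), ∫ s in (0:ℝ)..t, ψ i s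
      = ∫ s in (0:ℝ)..t, ∑ i ∈ Finset.Icc 1 (N-1), ψ i s := by
    rw [intervalIntegral.integral_finset_sum]
    intro i hi
    obtain ⟨h1, h2⟩ := hrange i hi
    exact ((hψ i h1 h2).1).intervalIntegrable 0 t
  have hsum : ∀ s ∈ Set.Icc (0:ℝ) T,
      ∑ i ∈ Finset.Icc 1 (N-1), ψ i s
        = -(2*ν) * ∑ i ∈ Finset.Icc 1 (N-1),
            ∫ y in (x i)..(x (i+1)), (du i s y)^2 := by
    intro s hs
    have : ∑ i ∈ Finset.Icc 1 (N-1), ψ i s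
        = 2 * ∑ i ∈ Finset.Icc 1 (N-1),
            ∫ y in (x i)..(x (i+1)), u0t i s y * u0 i s y := by
      rw [Finset.mul_sum]
      refine Finset.sum_congr rfl fun i hi => ?_
      obtain ⟨h1, h2⟩ := hrange i hi
      exact (hψ i h1 h2).2.1 s hs
    rw [this, keyA s hs]
    ring
  have hfin : (∫ s in (0:ℝ)..t, ∑ i ∈ Finset.Icc 1 (N-1), ψ i s)
      = -(2*ν) * ∫ s in (0:ℝ)..t,
          ∑ i ∈ Finset.Icc 1 (N-1), ∫ y in (x i)..(x (i+1)), (du i s y)^2 := by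
    rw [← intervalIntegral.integral_const_mul]
    apply intervalIntegral.integral_congr
    intro s hs
    rw [Set.uIcc_of_le ht.1] at hs
    exact hsum s ⟨hs.1, hs.2.trans ht.2⟩
  rw [hEt, hswap, hfin]
  ring
end
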